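/- arXiv:2405.20480 — 3 statements merged into one kernel-verified Lean document; each statement's English description precedes it below -/
import Mathlib

section
/- Let G = ([n], E) be a simple graph whose vertex n has degree t with neighbors 1, …, t, and let D = det(A) where A is the t×t matrix (y_{ij}) with 1 ≤ i ≤ t and d−t+1 ≤ j ≤ d (assuming d ≥ t). Then D ∉ L_G(d); equivalently, the image of D in R_G(d) is nonzero. -/
open MvPolynomial

/-- The Lovász–Saks–Schrijver ideal `L_G(d)` of a simple graph `G`. -/
noncomputable def lssIdeal (K : Type) [Field K] {V : Type} (G : SimpleGraph V) (d : ℕ) :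
    Ideal (MvPolynomial (V × Fin d) K) :=
  Ideal.span {f | ∃ i j : V, G.Adj i j ∧
    f = ∑ k : Fin d, MvPolynomial.X (i, k) * MvPolynomial.X (j, k)}

/-- Let `G` be a simple graph on `n+1` vertices whose last vertex has degree `t`, with
neighbors the first `t` vertices, and let `D` be the determinant of the `t × t` matrix
of variables `(y_{ij})` with `1 ≤ i ≤ t` and `d - t + 1 ≤ j ≤ d` (for `t ≤ d`).
Then `D ∉ L_G(d)`, i.e. the image of `D` in `R_G(d)` is nonzero. -/
theorem lss_det_not_mem (K : Type) [Field K] (n d t : ℕ)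
    (G : SimpleGraph (Fin (n + 1))) (htn : t ≤ n) (htd : t ≤ d)
    (hdeg : ∀ i : Fin (n + 1), G.Adj (Fin.last n) i ↔ (i : ℕ) < t) :
    Matrix.det (Matrix.of fun i j : Fin t =>
        (MvPolynomial.X (⟨i.1, by omega⟩, ⟨d - t + j.1, by omega⟩) :
          MvPolynomial (Fin (n + 1) × Fin d) K)) ∉ lssIdeal K G d := by
  intro hmem
  set y : Fin (n + 1) × Fin d → K :=
    fun p => if p.1.1 < t ∧ p.2.1 = d - t + p.1.1 then 1 else 0 with hy
  have hker : lssIdeal K G d ≤ RingHom.ker (MvPolynomial.eval y) := by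
    rw [lssIdeal, Ideal.span_le]
    rintro f ⟨i, j, hadj, rfl⟩
    simp only [SetLike.mem_coe, RingHom.mem_ker, map_sum, map_mul, eval_X]
    apply Finset.sum_eq_zero
    intro k _
    by_cases hi : i.1 < t ∧ k.1 = d - t + i.1
    · by_cases hj : j.1 < t ∧ k.1 = d - t + j.1
      · exact absurd (Fin.ext (by omega : i.1 = j.1)) hadj.ne
      · simp [hy, hj]
    · simp [hy, hi]
  have h1 := hker hmem
  rw [RingHom.mem_ker, RingHom.map_det] at h1
  have hM : (Matrix.of fun i j : Fin t =>
      (MvPolynomial.X (⟨i.1, by omega⟩, ⟨d - t + j.1, by omega⟩) :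
        MvPolynomial (Fin (n + 1) × Fin d) K)).map (MvPolynomial.eval y) = 1 := by
    ext i j
    simp only [Matrix.map_apply, Matrix.of_apply, eval_X, hy, Matrix.one_apply]
    by_cases h : i = j
    · subst h
      simp [i.2]
    · have : i.1 ≠ j.1 := fun hc => h (Fin.ext hc)
      rw [if_neg (by omega), if_neg h]
  rw [RingHom.mapMatrix_apply, hM, Matrix.det_one] at h1
  exact one_ne_zero h1
end

section
/- Let G = ([n], E) be a simple graph and let G' = G ∖ {n} be obtained from G by deleting vertex n and its adjacent edges. With S' = 𝕂[y_{ij} : i ∈ [n−1], j ∈ [d]] ⊆ S, one has S' ∩ L_G(d) = L_{G'}(d); consequently the canonical ring homomorphism R_{G'}(d) → R_G(d) is injective. -/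
open MvPolynomial

/-- The inclusion `S' = K[y_{ij} : i ∈ [n], j ∈ [d]] ⊆ S = K[y_{ij} : i ∈ [n+1], j ∈ [d]]`. -/
noncomputable def polyIncl (K : Type) [Field K] (n d : ℕ) :
    MvPolynomial (Fin n × Fin d) K →+* MvPolynomial (Fin (n + 1) × Fin d) K :=
  (MvPolynomial.rename (Prod.map Fin.castSucc id)).toRingHom

/-- The retraction `S → S'` killing the variables of the last vertex. -/
noncomputable def polyRetr (K : Type) [Field K] (n d : ℕ) :
    MvPolynomial (Fin (n + 1) × Fin d) K →ₐ[K] MvPolynomial (Fin n × Fin d) K :=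
  MvPolynomial.aeval (fun p =>
    if h : (p.1 : ℕ) < n then MvPolynomial.X (⟨(p.1 : ℕ), h⟩, p.2) else 0)

lemma polyRetr_incl (K : Type) [Field K] (n d : ℕ)
    (p : MvPolynomial (Fin n × Fin d) K) :
    polyRetr K n d (polyIncl K n d p) = p := by
  show (polyRetr K n d) (MvPolynomial.rename (Prod.map Fin.castSucc id) p) = p
  rw [polyRetr, aeval_rename]
  have : ((fun p : Fin (n+1) × Fin d =>
      if h : (p.1 : ℕ) < n then (MvPolynomial.X (⟨(p.1 : ℕ), h⟩, p.2) :
        MvPolynomial (Fin n × Fin d) K) else 0) ∘ Prod.map Fin.castSucc id)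
      = MvPolynomial.X := by
    funext q
    obtain ⟨a, b⟩ := q
    simp only [Function.comp_apply, Prod.map, Fin.coe_castSucc, id_eq]
    rw [dif_pos a.isLt]
  rw [this]
  exact aeval_X_left_apply p

/-- Let `G` be a simple graph on `n+1` vertices and let `G'` be obtained from `G` by
deleting the last vertex and all its adjacent edges.  Then `S' ∩ L_G(d) = L_{G'}(d)`
(as ideals of `S'`, i.e. the contraction of `L_G(d)` along `S' ⊆ S` is `L_{G'}(d)`);
consequently the canonical ring homomorphism `R_{G'}(d) → R_G(d)` is injective. -/
theorem lss_delete_vertex_contraction (K : Type) [Field K] (n d : ℕ)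
    (G : SimpleGraph (Fin (n + 1))) :
    Ideal.comap (polyIncl K n d) (lssIdeal K G d) =
        lssIdeal K (G.comap Fin.castSucc) d ∧
      ∀ h : lssIdeal K (G.comap Fin.castSucc) d ≤
          Ideal.comap (polyIncl K n d) (lssIdeal K G d),
        Function.Injective (Ideal.quotientMap (lssIdeal K G d) (polyIncl K n d) h) := by
  have hretr : lssIdeal K G d ≤
      Ideal.comap (polyRetr K n d).toRingHom (lssIdeal K (G.comap Fin.castSucc) d) := by
    rw [lssIdeal, Ideal.span_le]
    rintro f ⟨i, j, hij, rfl⟩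
    simp only [SetLike.mem_coe, Ideal.mem_comap, AlgHom.toRingHom_eq_coe, RingHom.coe_coe, map_sum, map_mul]
    by_cases hi : (i : ℕ) < n
    · by_cases hj : (j : ℕ) < n
      · apply Ideal.subset_span
        refine ⟨⟨(i : ℕ), hi⟩, ⟨(j : ℕ), hj⟩, ?_, ?_⟩
        · show G.Adj (Fin.castSucc ⟨(i : ℕ), hi⟩) (Fin.castSucc ⟨(j : ℕ), hj⟩)
          convert hij using 2 <;> exact Fin.ext rfl
        · refine Finset.sum_congr rfl fun k _ => ?_
          simp [polyRetr, hi, hj]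
      · have : ∀ k : Fin d,
            polyRetr K n d (MvPolynomial.X (i, k)) * polyRetr K n d (MvPolynomial.X (j, k))
              = 0 := by
          intro k; simp [polyRetr, hj]
        rw [Finset.sum_congr rfl fun k _ => this k]
        simp
    · have : ∀ k : Fin d,
          polyRetr K n d (MvPolynomial.X (i, k)) * polyRetr K n d (MvPolynomial.X (j, k))
            = 0 := by
        intro k; simp [polyRetr, hi]
      rw [Finset.sum_congr rfl fun k _ => this k]
      simp
  have hle : lssIdeal K (G.comap Fin.castSucc) d ≤
      Ideal.comap (polyIncl K n d) (lssIdeal K G d) := by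
    rw [lssIdeal, Ideal.span_le]
    rintro f ⟨i, j, hij, rfl⟩
    simp only [SetLike.mem_coe, Ideal.mem_comap]
    show (MvPolynomial.rename (Prod.map Fin.castSucc id) : _ →ₐ[K] _) _ ∈ _
    rw [map_sum]
    apply Ideal.subset_span
    refine ⟨Fin.castSucc i, Fin.castSucc j, hij, ?_⟩
    refine Finset.sum_congr rfl fun k _ => ?_
    simp [rename_X]
  have heq : Ideal.comap (polyIncl K n d) (lssIdeal K G d) =
      lssIdeal K (G.comap Fin.castSucc) d := by
    refine le_antisymm ?_ hle
    intro p hp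
    rw [Ideal.mem_comap] at hp
    have := hretr hp
    rw [Ideal.mem_comap] at this
    simpa [polyRetr_incl] using this
  refine ⟨heq, fun h => ?_⟩
  exact Ideal.quotientMap_injective' (le_of_eq heq)
end

section
/- Let 𝕂 be a field, n ≥ 2, and T = 𝕂[x_1, …, x_{n−1}, w_{ij} : 1 ≤ i, j ≤ n−1] a polynomial ring. Let W = (w_{ij}) be the (n−1)×(n−1) generic matrix, and let I = (f_1, …, f_{n−1}) ⊆ T where f_i = Σ_{j=1}^{n−1} w_{ij} x_j. Then I = (x_1, …, x_{n−1}) ∩ (I + (det W)), both (x_1, …, x_{n−1}) and I + (det W) are prime ideals of T, and the set of minimal primes of I is exactly {(x_1, …, x_{n−1}), I + (det W)}. -/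
/-!
Inverting `x_M`, the equations `f_i = ∑_{j ≤ M} w_{ij} x_j = 0` (`i < k`) can be solved for
`w_{iM}`. This gives a map into a domain whose kernel is the `x_M`-saturation of
`(f_0, …, f_{k-1})`; it also kills `det W` when `k = M + 1`, since `x` is then a kernel vector of
the image of `W`. So `(f_0, …, f_{k-1})` and `I + (det W)` are prime once `x_M` is a
nonzerodivisor modulo them. Setting `x_M = 0` turns a relation among their generators into one
among the `f_i` with one column fewer (and `det W`). Those are Koszul relations, since
inductively these `f_i` form a regular sequence, and in the determinantal case also the rows of
the adjugate of `W`, by primality of the previous `I + (det W)`. Both kinds lift to multiples of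
`x_M`.

Finally `det W * x_j ∈ I` by Cramer's rule and `det W ∉ (x)`, so `I = (x) ∩ (I + (det W))`, and
the minimal primes of an intersection of two incomparable primes are these two primes.
-/

open MvPolynomial

/-- The polynomial ring `T = K[x_1, …, x_{n-1}, w_{ij} : 1 ≤ i,j ≤ n-1]`:
`Sum.inl i` is the variable `x_i` and `Sum.inr (i, j)` is the variable `w_{ij}`. -/
abbrev starPolyRing (K : Type) [Field K] (n : ℕ) :=
  MvPolynomial (Fin (n - 1) ⊕ Fin (n - 1) × Fin (n - 1)) K

/-- The generator `f_i = ∑_j w_{ij} x_j` of the LSS ideal of the `(n-1)`-star graph. -/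
noncomputable def starGen (K : Type) [Field K] (n : ℕ) (i : Fin (n - 1)) :
    starPolyRing K n :=
  ∑ j : Fin (n - 1), MvPolynomial.X (Sum.inr (i, j)) * MvPolynomial.X (Sum.inl j)

/-- The ideal `I = (f_1, …, f_{n-1})`. -/
noncomputable def starIdeal (K : Type) [Field K] (n : ℕ) : Ideal (starPolyRing K n) :=
  Ideal.span (Set.range (starGen K n))

/-- The determinant of the generic `(n-1) × (n-1)` matrix `W = (w_{ij})`. -/
noncomputable def detW (K : Type) [Field K] (n : ℕ) : starPolyRing K n :=
  Matrix.det (Matrix.of fun i j : Fin (n - 1) => MvPolynomial.X (Sum.inr (i, j)))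

namespace Ideal

variable {A : Type*} [CommRing A]

theorem mem_span_range_fin_iff {g : ℕ → A} {k : ℕ} {y : A} :
    y ∈ span (Set.range fun i : Fin k => g i) ↔
      ∃ a : ℕ → A, ∑ i ∈ Finset.range k, a i * g i = y := by
  rw [mem_span_range_iff_exists_fun]
  constructor
  · rintro ⟨a, rfl⟩
    refine ⟨fun i => if h : i < k then a ⟨i, h⟩ else 0, ?_⟩
    rw [← Fin.sum_univ_eq_sum_range]
    simp
  · rintro ⟨a, rfl⟩
    exact ⟨fun i => a i, Fin.sum_univ_eq_sum_range (fun i => a i * g i) k⟩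

theorem mem_span_range_fin_sup_span_singleton_iff {g : ℕ → A} {k : ℕ} {d y : A} :
    y ∈ span (Set.range fun i : Fin k => g i) ⊔ span {d} ↔
      ∃ (a : ℕ → A) (b : A), ∑ i ∈ Finset.range k, a i * g i + b * d = y := by
  simp only [Submodule.mem_sup, mem_span_range_fin_iff, mem_span_singleton']
  constructor
  · rintro ⟨_, ⟨a, rfl⟩, _, ⟨b, rfl⟩, rfl⟩
    exact ⟨a, b, rfl⟩
  · rintro ⟨a, b, rfl⟩
    exact ⟨_, ⟨a, rfl⟩, _, ⟨b, rfl⟩, rfl⟩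

theorem sum_mul_mem_span_range_fin (g a : ℕ → A) (k : ℕ) :
    ∑ i ∈ Finset.range k, a i * g i ∈ span (Set.range fun i : Fin k => g i) :=
  mem_span_range_fin_iff.2 ⟨a, rfl⟩

theorem inf_sup_span_singleton_eq {I P : Ideal A} [P.IsPrime] {d : A} (hIP : I ≤ P)
    (hd : d ∉ P) (hdP : P ≤ I.colon {d}) : P ⊓ (I ⊔ span {d}) = I := by
  refine le_antisymm (fun f ⟨hfP, hfQ⟩ => ?_) (le_inf hIP le_sup_left)
  obtain ⟨y, hy, _, hz, rfl⟩ := Submodule.mem_sup.1 hfQ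
  obtain ⟨c, rfl⟩ := mem_span_singleton'.1 hz
  have hcP : c ∈ P := by
    refine (IsPrime.mem_or_mem ‹_› ?_).resolve_right hd
    simpa using P.sub_mem hfP (hIP hy)
  exact I.add_mem hy (Submodule.mem_colon_singleton.1 (hdP hcP))

theorem minimalPrimes_inf_eq_pair {P Q : Ideal A} [hP : P.IsPrime] [hQ : Q.IsPrime]
    (hPQ : ¬P ≤ Q) (hQP : ¬Q ≤ P) : (P ⊓ Q).minimalPrimes = {P, Q} := by
  have below {p : Ideal A} (hp : p.IsPrime) (h : P ⊓ Q ≤ p) : P ≤ p ∨ Q ≤ p :=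
    hp.inf_le.1 h
  ext p
  simp only [Set.mem_ofPred_eq, Set.mem_insert_iff, Set.mem_singleton_iff]
  constructor
  · rintro ⟨⟨hp, hPQp⟩, hmin⟩
    rcases below hp hPQp with h | h
    · exact .inl (le_antisymm (hmin ⟨hP, inf_le_left⟩ h) h)
    · exact .inr (le_antisymm (hmin ⟨hQ, inf_le_right⟩ h) h)
  · rintro (rfl | rfl)
    · refine ⟨⟨hP, inf_le_left⟩, fun q ⟨hq, hPQq⟩ hqP => ?_⟩
      exact (below hq hPQq).resolve_right fun hQq => hQP (hQq.trans hqP)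
    · refine ⟨⟨hQ, inf_le_right⟩, fun q ⟨hq, hPQq⟩ hqQ => ?_⟩
      exact (below hq hPQq).resolve_left fun hPq => hPQ (hPq.trans hqQ)

theorem map_span_range_sup_span_singleton {B F ι : Type*} [CommRing B] [FunLike F A B]
    [RingHomClass F A B] (f : F) (g : ι → A) (d : A) :
    (span (Set.range g) ⊔ span {d}).map f = span (Set.range (f ∘ g)) ⊔ span {f d} := by
  rw [map_sup, map_span, map_span, Set.range_comp, Set.image_singleton]

theorem comap_map_of_leftInverse {B F G : Type*} [CommRing B] [FunLike F A B]
    [RingHomClass F A B] [FunLike G B A] [RingHomClass G B A] {ι : F} {π : G}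
    (h : Function.LeftInverse π ι) (I : Ideal A) : (I.map ι).comap ι = I := by
  refine le_antisymm (fun f hf => ?_) le_comap_map
  have hI : (I.map ι).map π ≤ I :=
    map_le_iff_le_comap.2 (map_le_iff_le_comap.2 fun x hx => by simpa [h x] using hx)
  exact h f ▸ hI (mem_map_of_mem π (mem_comap.1 hf))

theorem mem_of_pow_mul_mem {J : Ideal A} {s : A} (hs : ∀ f, s * f ∈ J → f ∈ J) :
    ∀ (n : ℕ) {f : A}, s ^ n * f ∈ J → f ∈ J
  | 0, f, h => by simpa using h
  | n + 1, f, h => mem_of_pow_mul_mem hs n (hs _ (by rwa [pow_succ', mul_assoc] at h))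

theorem ker_eq_of_sub_algebraMap_mem_map {B : Type*} [CommRing B] [Algebra A B] {s : A}
    [IsLocalization.Away s B] {ψ : A →+* B} {J : Ideal A} (hJ : J ≤ RingHom.ker ψ)
    (hψ : ∀ f, ψ f - algebraMap A B f ∈ J.map (algebraMap A B))
    (hs : ∀ f, s * f ∈ J → f ∈ J) : RingHom.ker ψ = J := by
  refine le_antisymm (fun f hf => ?_) hJ
  have hfJ : algebraMap A B f ∈ J.map (algebraMap A B) := by
    simpa [RingHom.mem_ker.1 hf] using neg_mem (hψ f)
  obtain ⟨⟨⟨j, hj⟩, ⟨_, m, rfl⟩⟩, hm⟩ :=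
    (IsLocalization.mem_map_algebraMap_iff (Submonoid.powers s) B).1 hfJ
  rw [← map_mul, IsLocalization.eq_iff_exists (Submonoid.powers s)] at hm
  obtain ⟨⟨_, c, rfl⟩, hc⟩ := hm
  refine mem_of_pow_mul_mem hs (c + m) ?_
  have hc : s ^ c * (f * s ^ m) = s ^ c * j := hc
  rw [pow_add, mul_assoc, mul_comm _ f, hc]
  exact J.mul_mem_left _ hj

theorem mem_of_mul_mem_of_lift {σ : A →+* A} {s : A} (hs : IsLeftRegular s) (hσs : σ s = 0)
    (hsplit : ∀ f, ∃ f', f = σ f + s * f') {g g₀ : ℕ → A} {k : ℕ} {d : A}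
    (hσg : ∀ i, σ (g i) = g₀ i) (hσd : σ d = d)
    (hlift : ∀ (a : ℕ → A) (b : A), ∑ i ∈ Finset.range k, a i * g₀ i + b * d = 0 →
      ∃ r ∈ span (Set.range fun i : Fin k => g i) ⊔ span {d},
        ∑ i ∈ Finset.range k, a i * g i + b * d = s * r)
    {f : A} (hf : s * f ∈ span (Set.range fun i : Fin k => g i) ⊔ span {d}) :
    f ∈ span (Set.range fun i : Fin k => g i) ⊔ span {d} := by
  obtain ⟨a, b, hab⟩ := mem_span_range_fin_sup_span_singleton_iff.1 hf
  choose a' ha' using fun i => hsplit (a i)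
  obtain ⟨b', hb'⟩ := hsplit b
  obtain ⟨r, hr, hlifted⟩ := hlift (fun i => σ (a i)) (σ b) <| by
    simpa [map_sum, hσg, hσd, hσs] using congrArg σ hab
  have hsum : ∑ i ∈ Finset.range k, a i * g i =
      ∑ i ∈ Finset.range k, σ (a i) * g i + s * ∑ i ∈ Finset.range k, a' i * g i := by
    rw [Finset.mul_sum, ← Finset.sum_add_distrib]
    refine Finset.sum_congr rfl fun i _ => ?_
    conv_lhs => rw [ha' i]
    ring
  have hb : b * d = σ b * d + s * (b' * d) := by
    conv_lhs => rw [hb']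
    ring
  refine (hs (?_ : s * f = s * (r + (∑ i ∈ Finset.range k, a' i * g i + b' * d)))) ▸
    add_mem hr (mem_span_range_fin_sup_span_singleton_iff.2 ⟨a', b', rfl⟩)
  linear_combination -hab + hsum + hb + hlifted

end Ideal

section Koszul

open Finset

variable {A : Type*} [CommRing A]

def OnlyKoszulSyzygies (g : ℕ → A) (k : ℕ) : Prop :=
  ∀ a : ℕ → A, ∑ i ∈ range k, a i * g i = 0 →
    ∃ t : ℕ → ℕ → A, ∀ i < k, a i = ∑ j ∈ range k, (t i j - t j i) * g j

theorem onlyKoszulSyzygies_zero (g : ℕ → A) : OnlyKoszulSyzygies g 0 :=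
  fun _ _ => ⟨0, fun _ hi => absurd hi (Nat.not_lt_zero _)⟩

theorem sum_sum_antisymm_mul_eq_zero (t : ℕ → ℕ → A) (G : ℕ → A) (k : ℕ) :
    ∑ i ∈ range k, ∑ j ∈ range k, (t i j - t j i) * G j * G i = 0 := by
  simp only [sub_mul, sum_sub_distrib]
  rw [sum_comm (f := fun i j => t j i * G j * G i), sub_eq_zero]
  exact sum_congr rfl fun i _ => sum_congr rfl fun j _ => by ring

theorem OnlyKoszulSyzygies.exists_of_last_mem {g : ℕ → A} {k : ℕ}
    (hK : OnlyKoszulSyzygies g k) {a : ℕ → A} (ha : ∑ i ∈ range (k + 1), a i * g i = 0)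
    (hak : a k ∈ Ideal.span (Set.range fun i : Fin k => g i)) :
    ∃ t : ℕ → ℕ → A, ∀ i < k + 1,
      a i = ∑ j ∈ range (k + 1), (t i j - t j i) * g j := by
  obtain ⟨c, hc⟩ := Ideal.mem_span_range_fin_iff.1 hak
  obtain ⟨t, ht⟩ := hK (fun i => a i + c i * g k) <| by
    simp only [add_mul, sum_add_distrib, mul_right_comm _ (g k), ← sum_mul, hc]
    rwa [← sum_range_succ]
  -- add the column `-c` to `t`, keeping row `k` zero
  refine ⟨fun i j => if i = k then 0 else if j = k then -c i else t i j, fun i hi => ?_⟩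
  rw [sum_range_succ]
  rcases (Nat.lt_succ_iff_lt_or_eq.1 hi) with hik | rfl
  · have hsum : ∑ j ∈ range k, ((if i = k then 0 else if j = k then -c i else t i j) -
        if j = k then 0 else if i = k then -c j else t j i) * g j =
        a i + c i * g k := by
      rw [ht i hik]
      refine sum_congr rfl fun j hj => ?_
      simp [hik.ne, (mem_range.1 hj).ne]
    rw [hsum]
    simp [hik.ne]
  · have hsum : ∑ j ∈ range i, ((if i = i then 0 else if j = i then -c i else t i j) -
        if j = i then 0 else if i = i then -c j else t j i) * g j = a i := by
      rw [← hc]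
      refine sum_congr rfl fun j hj => ?_
      simp [(mem_range.1 hj).ne]
    rw [hsum]
    simp

theorem OnlyKoszulSyzygies.succ {g : ℕ → A} {k : ℕ} (hK : OnlyKoszulSyzygies g k)
    (hP : (Ideal.span (Set.range fun i : Fin k => g i)).IsPrime)
    (hg : g k ∉ Ideal.span (Set.range fun i : Fin k => g i)) :
    OnlyKoszulSyzygies g (k + 1) := by
  intro a ha
  refine hK.exists_of_last_mem ha ((hP.mem_or_mem ?_).resolve_right hg)
  rw [sum_range_succ, add_eq_zero_iff_eq_neg'] at ha
  rw [ha]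
  exact neg_mem (Ideal.sum_mul_mem_span_range_fin g a k)

theorem sum_koszul_mul_eq {g g' u : ℕ → A} {x : A} (hg : ∀ j, g' j = g j + u j * x)
    (t : ℕ → ℕ → A) (k : ℕ) :
    ∑ i ∈ range k, (∑ j ∈ range k, (t i j - t j i) * g j) * g' i =
      x * ∑ i ∈ range k, (∑ j ∈ range k, (t j i - t i j) * u j) * g' i := by
  have hterm : ∀ i j, (t i j - t j i) * g j * g' i =
      (t i j - t j i) * g' j * g' i + x * ((t j i - t i j) * u j * g' i) := fun i j => by
    simp only [hg]; ring
  simp only [sum_mul, mul_sum, hterm, sum_add_distrib, sum_sum_antisymm_mul_eq_zero, zero_add]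

end Koszul

namespace MvPolynomial

variable {R σ : Type*} [CommRing R]

open scoped Classical in
noncomputable def killVars (S : Set σ) : MvPolynomial σ R →ₐ[R] MvPolynomial σ R :=
  aeval fun i => if i ∈ S then 0 else X i

theorem killVars_X_of_mem {S : Set σ} {i : σ} (h : i ∈ S) :
    killVars S (X i : MvPolynomial σ R) = 0 := by
  simp [killVars, h]

theorem killVars_X_of_notMem {S : Set σ} {i : σ} (h : i ∉ S) :
    killVars S (X i : MvPolynomial σ R) = X i := by
  simp [killVars, h]

theorem sub_killVars_mem_span_X (S : Set σ) (f : MvPolynomial σ R) :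
    f - killVars S f ∈ Ideal.span (X '' S) := by
  induction f using MvPolynomial.induction_on with
  | C a => simp [killVars]
  | add p q hp hq => simpa [add_sub_add_comm] using add_mem hp hq
  | mul_X p i hp =>
    by_cases h : i ∈ S
    · rw [map_mul, killVars_X_of_mem h, mul_zero, sub_zero]
      exact Ideal.mul_mem_left _ _ (Ideal.subset_span ⟨i, h, rfl⟩)
    · rw [map_mul, killVars_X_of_notMem h, ← sub_mul]
      exact Ideal.mul_mem_right _ _ hp

theorem ker_killVars (S : Set σ) :
    RingHom.ker (killVars S : MvPolynomial σ R →ₐ[R] MvPolynomial σ R) =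
      Ideal.span (X '' S) := by
  refine le_antisymm (fun f hf => ?_) (Ideal.span_le.2 ?_)
  · simpa [RingHom.mem_ker.1 hf] using sub_killVars_mem_span_X S f
  · rintro _ ⟨i, hi, rfl⟩
    exact killVars_X_of_mem hi

theorem isPrime_span_X_image [IsDomain R] (S : Set σ) :
    (Ideal.span (X '' S : Set (MvPolynomial σ R))).IsPrime :=
  ker_killVars (R := R) S ▸ RingHom.ker_isPrime _

theorem exists_eq_killVars_singleton_add (i : σ) (f : MvPolynomial σ R) :
    ∃ f', f = killVars {i} f + X i * f' := by
  obtain ⟨f', hf'⟩ := Ideal.mem_span_singleton'.1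
    (by simpa using sub_killVars_mem_span_X {i} f)
  exact ⟨f', by rw [mul_comm, hf', add_sub_cancel]⟩

theorem eval₂Hom_add_sub_algebraMap_mem {B : Type*} [CommRing B]
    [Algebra (MvPolynomial σ R) B] (δ : σ → B) {J : Ideal B} (hδ : ∀ v, δ v ∈ J)
    (f : MvPolynomial σ R) :
    eval₂Hom ((algebraMap (MvPolynomial σ R) B).comp C)
        (fun v => algebraMap (MvPolynomial σ R) B (X v) + δ v) f -
      algebraMap (MvPolynomial σ R) B f ∈ J := by
  rw [← Ideal.Quotient.eq, ← RingHom.comp_apply, ← RingHom.comp_apply]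
  congr 1
  refine ringHom_ext (fun r => by simp) fun v => ?_
  simpa [Ideal.Quotient.eq_zero_iff_mem] using hδ v

end MvPolynomial

namespace Matrix

theorem sum_adjugate_mul_mulVec {A : Type*} [CommRing A] {N : ℕ}
    (M : Matrix (Fin N) (Fin N) A) (v : Fin N → A) (j : Fin N) :
    ∑ i, M.adjugate j i * (M *ᵥ v) i = M.det * v j := by
  have h : M.adjugate *ᵥ (M *ᵥ v) = M.det • v := by
    rw [mulVec_mulVec, adjugate_mul, smul_mulVec, one_mulVec]
  simpa [mulVec, dotProduct] using congrFun h j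

end Matrix

namespace StarLSS

open Finset Matrix

noncomputable section

variable {R : Type*} [CommRing R]

-- All sizes at once: `x j = X (inl j)` and `w i j = X (inr (i, j))` for all `i j : ℕ`, and
-- `gen c i` only uses the first `c` columns of `w`.
variable (R) in
abbrev UPoly := MvPolynomial (ℕ ⊕ ℕ × ℕ) R

def xVar (j : ℕ) : UPoly R := X (.inl j)

def wVar (i j : ℕ) : UPoly R := X (.inr (i, j))

def gen (c i : ℕ) : UPoly R := ∑ j ∈ range c, wVar i j * xVar j

def genMatrix (N : ℕ) : Matrix (Fin N) (Fin N) (UPoly R) := of fun a b => wVar a b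

def genDet (N : ℕ) : UPoly R := (genMatrix N).det

def adjEntry (N j i : ℕ) : UPoly R :=
  if h : j < N ∧ i < N then (genMatrix N).adjugate ⟨j, h.1⟩ ⟨i, h.2⟩ else 0

def rowIdeal (k c : ℕ) : Ideal (UPoly R) := Ideal.span (Set.range fun i : Fin k => gen c i)

def detIdeal (N : ℕ) : Ideal (UPoly R) := rowIdeal N N ⊔ Ideal.span {genDet N}

def varIdeal (c : ℕ) : Ideal (UPoly R) := Ideal.span (Set.range fun j : Fin c => xVar j)

theorem gen_succ (c i : ℕ) : (gen (c + 1) i : UPoly R) = gen c i + wVar i c * xVar c := by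
  simp [gen, sum_range_succ]

theorem sum_adjEntry_mul {N j : ℕ} (hj : j < N) (v : ℕ → UPoly R) :
    ∑ i ∈ range N, adjEntry N j i * ∑ b ∈ range N, wVar i b * v b = genDet N * v j := by
  rw [genDet, ← (genMatrix N).sum_adjugate_mul_mulVec (fun b => v b) ⟨j, hj⟩,
    ← Fin.sum_univ_eq_sum_range]
  refine sum_congr rfl fun i _ => ?_
  simp [adjEntry, hj, mulVec, dotProduct, genMatrix,
    ← Fin.sum_univ_eq_sum_range (fun b => wVar (i : ℕ) b * v b) N]

theorem sum_adjEntry_mul_gen {N j : ℕ} (hj : j < N) :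
    ∑ i ∈ range N, (adjEntry N j i : UPoly R) * gen N i = genDet N * xVar j :=
  sum_adjEntry_mul hj (xVar (R := R))

theorem sum_adjEntry_succ_mul_gen {N j : ℕ} (hj : j < N + 1) :
    ∑ i ∈ range (N + 1), (adjEntry (N + 1) j i : UPoly R) * gen N i =
      genDet (N + 1) * if j < N then xVar j else 0 := by
  rw [← sum_adjEntry_mul hj (fun b => if b < N then xVar b else 0)]
  refine sum_congr rfl fun i _ => ?_
  simp only [gen, sum_range_succ, lt_irrefl, if_false, mul_zero, add_zero]
  exact congrArg _ (sum_congr rfl fun b hb => by simp [mem_range.1 hb])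

theorem adjEntry_last (N : ℕ) : (adjEntry (N + 1) N N : UPoly R) = genDet N := by
  have hsub : (genMatrix (N + 1)).submatrix (Fin.last N).succAbove (Fin.last N).succAbove =
      (genMatrix N : Matrix _ _ (UPoly R)) := by
    ext a b
    simp [genMatrix]
  have hN : (⟨N, N.lt_succ_self⟩ : Fin (N + 1)) = Fin.last N := rfl
  simp only [adjEntry, N.lt_succ_self, and_self, dif_pos, hN,
    adjugate_fin_succ_eq_det_submatrix, hsub, genDet, Fin.val_last, ← two_mul, pow_mul]
  simp

def setXZero (c : ℕ) : UPoly R →ₐ[R] UPoly R := killVars {.inl c}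

theorem setXZero_xVar_self (c : ℕ) : setXZero c (xVar c : UPoly R) = 0 :=
  killVars_X_of_mem rfl

theorem setXZero_xVar_of_ne {c j : ℕ} (h : j ≠ c) : setXZero c (xVar j : UPoly R) = xVar j :=
  killVars_X_of_notMem (by simpa using h)

theorem setXZero_wVar (c i j : ℕ) : setXZero c (wVar i j : UPoly R) = wVar i j :=
  killVars_X_of_notMem (by simp)

theorem setXZero_gen_succ (c i : ℕ) : setXZero c (gen (c + 1) i : UPoly R) = gen c i := by
  rw [gen_succ, map_add, map_mul, setXZero_xVar_self, mul_zero, add_zero, gen, map_sum]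
  exact sum_congr rfl fun j hj => by
    rw [map_mul, setXZero_wVar, setXZero_xVar_of_ne (mem_range.1 hj).ne]

theorem setXZero_genDet (c N : ℕ) : setXZero c (genDet N : UPoly R) = genDet N := by
  rw [genDet, AlgHom.map_det]
  exact congrArg det (Matrix.ext fun a b => setXZero_wVar (R := R) c a b)

theorem exists_eq_setXZero_add (c : ℕ) (f : UPoly R) : ∃ f', f = setXZero c f + xVar c * f' :=
  exists_eq_killVars_singleton_add (Sum.inl c) f

theorem varIdeal_isPrime [IsDomain R] (c : ℕ) : (varIdeal c : Ideal (UPoly R)).IsPrime := by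
  rw [varIdeal, show (fun j : Fin c => (xVar j : UPoly R)) =
    (X : _ → UPoly R) ∘ (Sum.inl ∘ Fin.val) from rfl, Set.range_comp]
  exact isPrime_span_X_image _

theorem gen_mem_varIdeal (c i : ℕ) : (gen c i : UPoly R) ∈ varIdeal c :=
  sum_mem fun j hj => Ideal.mul_mem_left _ _ (Ideal.subset_span ⟨⟨j, mem_range.1 hj⟩, rfl⟩)

theorem genDet_notMem_varIdeal [Nontrivial R] (N c : ℕ) :
    (genDet N : UPoly R) ∉ varIdeal c := by
  let φ : UPoly R →+* R := eval (Sum.elim 0 fun p => if p.1 = p.2 then 1 else 0)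
  have hvar : varIdeal c ≤ RingHom.ker φ :=
    Ideal.span_le.2 (Set.range_subset_iff.2 fun j => by simp [φ, xVar])
  have hdet : φ (genDet N) = 1 := by
    rw [genDet, RingHom.map_det]
    convert det_one (R := R) (n := Fin N)
    ext a b
    simp [φ, genMatrix, wVar, one_apply, Fin.val_inj]
  exact fun h => one_ne_zero (hdet.symm.trans (hvar h))

def pickRow (k : ℕ) : UPoly R →+* R :=
  eval (Sum.elim (fun j => if j = 0 then 1 else 0) fun p => if p = (k, 0) then 1 else 0)

theorem pickRow_gen {k c : ℕ} (hc : 0 < c) (i : ℕ) :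
    pickRow k (gen c i : UPoly R) = if i = k then 1 else 0 := by
  rw [gen, map_sum, sum_eq_single_of_mem 0 (mem_range.2 hc)]
  · simp [pickRow, xVar, wVar]
  · intro j _ hj
    simp [pickRow, xVar, wVar, hj]

theorem rowIdeal_le_ker_pickRow {k c : ℕ} (hc : 0 < c) :
    rowIdeal k c ≤ RingHom.ker (pickRow k : UPoly R →+* R) :=
  Ideal.span_le.2 (Set.range_subset_iff.2 fun i => by simp [pickRow_gen hc, i.isLt.ne])

theorem gen_notMem_rowIdeal [Nontrivial R] {c : ℕ} (hc : 0 < c) (k : ℕ) :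
    (gen c k : UPoly R) ∉ rowIdeal k c := fun h => by
  simpa [pickRow_gen hc] using rowIdeal_le_ker_pickRow hc h

theorem gen_notMem_detIdeal [Nontrivial R] {N : ℕ} (hN : 0 < N) :
    (gen N N : UPoly R) ∉ detIdeal N := by
  have hdet : pickRow N (genDet N : UPoly R) = 0 := by
    have : Nonempty (Fin N) := ⟨⟨0, hN⟩⟩
    rw [genDet, RingHom.map_det]
    convert det_zero (R := R) (n := Fin N)
    ext a b
    simp [pickRow, genMatrix, wVar, a.isLt.ne]
  intro h
  have := sup_le (rowIdeal_le_ker_pickRow hN)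
    (Ideal.span_le.2 (Set.singleton_subset_iff.2 hdet)) h
  simp [pickRow_gen hN] at this

theorem exists_xVar_mul_of_sum_eq_zero {M k : ℕ}
    (hK : OnlyKoszulSyzygies (gen M : ℕ → UPoly R) k)
    {a : ℕ → UPoly R} (ha : ∑ i ∈ range k, a i * gen M i = 0) :
    ∃ r ∈ rowIdeal k (M + 1), ∑ i ∈ range k, a i * gen (M + 1) i = xVar M * r := by
  obtain ⟨t, ht⟩ := hK a ha
  rw [sum_congr rfl fun i hi => by rw [ht i (mem_range.1 hi)]]
  exact ⟨_, Ideal.sum_mul_mem_span_range_fin _ _ k, sum_koszul_mul_eq (gen_succ M) t k⟩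

theorem rowIdeal_mem_of_xVar_mul_mem [IsDomain R] {M k : ℕ}
    (hK : OnlyKoszulSyzygies (gen M : ℕ → UPoly R) k) {f : UPoly R}
    (hf : xVar M * f ∈ rowIdeal k (M + 1)) :
    f ∈ rowIdeal k (M + 1) := by
  have hJ : rowIdeal k (M + 1) = rowIdeal k (M + 1) ⊔ Ideal.span {(0 : UPoly R)} := by simp
  rw [hJ] at hf ⊢
  refine Ideal.mem_of_mul_mem_of_lift (σ := (setXZero M : UPoly R →ₐ[R] UPoly R).toRingHom)
    (mul_right_injective₀ (X_ne_zero _)) (setXZero_xVar_self M) (exists_eq_setXZero_add M)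
    (setXZero_gen_succ M) (map_zero _) (fun a b hab => ?_) hf
  simp only [mul_zero, add_zero] at hab ⊢
  obtain ⟨r, hr, h⟩ := exists_xVar_mul_of_sum_eq_zero hK hab
  exact ⟨r, hJ ▸ hr, h⟩

theorem exists_koszul_add_adjEntry {N : ℕ} (hK : OnlyKoszulSyzygies (gen N : ℕ → UPoly R) N)
    (hQ : ∀ b : UPoly R, b * gen N N ∈ rowIdeal N N → b ∈ detIdeal N) {a : ℕ → UPoly R}
    (ha : ∑ i ∈ range (N + 1), a i * gen N i = 0) :
    ∃ (t : ℕ → ℕ → UPoly R) (γ : UPoly R), ∀ i < N + 1,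
      a i = ∑ j ∈ range (N + 1), (t i j - t j i) * gen N j + γ * adjEntry (N + 1) N i := by
  have hlast : a N * gen N N ∈ rowIdeal N N := by
    rw [sum_range_succ, add_eq_zero_iff_eq_neg'] at ha
    rw [ha]
    exact neg_mem (Ideal.sum_mul_mem_span_range_fin _ _ N)
  obtain ⟨a₀, γ, hγ⟩ := Ideal.mem_span_range_fin_sup_span_singleton_iff.1 (hQ _ hlast)
  have hsyz : ∑ i ∈ range (N + 1), (a i - γ * adjEntry (N + 1) N i) * gen N i = 0 := by
    simp only [sub_mul, sum_sub_distrib, mul_assoc, ← mul_sum,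
      sum_adjEntry_succ_mul_gen N.lt_succ_self, ha]
    simp
  have hmem : a N - γ * adjEntry (N + 1) N N ∈ rowIdeal N N := by
    rw [adjEntry_last, ← hγ, add_sub_cancel_right]
    exact Ideal.sum_mul_mem_span_range_fin _ _ N
  obtain ⟨t, ht⟩ := hK.exists_of_last_mem hsyz hmem
  exact ⟨t, γ, fun i hi => by rw [← ht i hi]; ring⟩

theorem sum_sum_mul_adjEntry_mul_gen {N c : ℕ} (hc : c = N ∨ c = N + 1) (β : ℕ → UPoly R) :
    ∑ i ∈ range (N + 1), (∑ j ∈ range N, β j * adjEntry (N + 1) j i) * gen c i =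
      (∑ j ∈ range N, β j * xVar j) * genDet (N + 1) := by
  simp only [sum_mul, mul_assoc]
  rw [sum_comm]
  refine sum_congr rfl fun j hj => ?_
  have hjN := mem_range.1 hj
  rw [← mul_sum, mul_comm (xVar j)]
  rcases hc with rfl | rfl
  · rw [sum_adjEntry_succ_mul_gen (by omega), if_pos hjN]
  · rw [sum_adjEntry_mul_gen (by omega)]

theorem exists_koszul_adjEntry_of_sum_add_mul_genDet_eq_zero [IsDomain R] {N : ℕ}
    (hK : OnlyKoszulSyzygies (gen N : ℕ → UPoly R) N)
    (hQ : ∀ b : UPoly R, b * gen N N ∈ rowIdeal N N → b ∈ detIdeal N) {a : ℕ → UPoly R}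
    {b : UPoly R} (h : ∑ i ∈ range (N + 1), a i * gen N i + b * genDet (N + 1) = 0) :
    ∃ (β : ℕ → UPoly R) (t : ℕ → ℕ → UPoly R) (γ : UPoly R),
      b = ∑ j ∈ range N, β j * xVar j ∧ ∀ i < N + 1,
        a i + ∑ j ∈ range N, β j * adjEntry (N + 1) j i =
          ∑ j ∈ range (N + 1), (t i j - t j i) * gen N j + γ * adjEntry (N + 1) N i := by
  have hb : b ∈ varIdeal N := by
    refine ((varIdeal_isPrime N).mem_or_mem ?_).resolve_right (genDet_notMem_varIdeal (N + 1) N)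
    rw [add_eq_zero_iff_eq_neg'] at h
    rw [h]
    exact neg_mem (sum_mem fun i _ => Ideal.mul_mem_left _ _ (gen_mem_varIdeal N i))
  obtain ⟨β, rfl⟩ := Ideal.mem_span_range_fin_iff.1 hb
  obtain ⟨t, γ, ht⟩ := exists_koszul_add_adjEntry hK hQ
    (a := fun i => a i + ∑ j ∈ range N, β j * adjEntry (N + 1) j i) <| by
      simp only [add_mul, sum_add_distrib, sum_sum_mul_adjEntry_mul_gen (.inl rfl), h]
  exact ⟨β, t, γ, rfl, ht⟩

theorem exists_xVar_mul_of_sum_add_mul_genDet_eq_zero [IsDomain R] {N : ℕ}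
    (hK : OnlyKoszulSyzygies (gen N : ℕ → UPoly R) N)
    (hQ : ∀ b : UPoly R, b * gen N N ∈ rowIdeal N N → b ∈ detIdeal N) {a : ℕ → UPoly R}
    {b : UPoly R} (h : ∑ i ∈ range (N + 1), a i * gen N i + b * genDet (N + 1) = 0) :
    ∃ r ∈ detIdeal (N + 1),
      ∑ i ∈ range (N + 1), a i * gen (N + 1) i + b * genDet (N + 1) = xVar N * r := by
  obtain ⟨β, t, γ, rfl, ht⟩ := exists_koszul_adjEntry_of_sum_add_mul_genDet_eq_zero hK hQ h
  -- the adjugate rows `j < N` cancel against `b * det`, row `N` leaves `γ * det * x N`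
  refine ⟨∑ i ∈ range (N + 1), (∑ j ∈ range (N + 1), (t j i - t i j) * wVar j N) *
      gen (N + 1) i + γ * genDet (N + 1),
    add_mem (Ideal.mem_sup_left (Ideal.sum_mul_mem_span_range_fin _ _ _))
      (Ideal.mul_mem_left _ _ (Ideal.mem_sup_right (Ideal.mem_span_singleton_self _))), ?_⟩
  have hai : ∀ i ∈ range (N + 1), a i * gen (N + 1) i =
      (∑ j ∈ range (N + 1), (t i j - t j i) * gen N j) * gen (N + 1) i +
        γ * (adjEntry (N + 1) N i * gen (N + 1) i) -
        (∑ j ∈ range N, β j * adjEntry (N + 1) j i) * gen (N + 1) i := fun i hi => by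
    rw [eq_sub_of_add_eq (ht i (mem_range.1 hi))]
    ring
  rw [sum_congr rfl hai, sum_sub_distrib, sum_add_distrib, ← mul_sum,
    sum_koszul_mul_eq (gen_succ N) t (N + 1), sum_adjEntry_mul_gen N.lt_succ_self,
    sum_sum_mul_adjEntry_mul_gen (.inr rfl)]
  ring

theorem detIdeal_mem_of_xVar_mul_mem [IsDomain R] {N : ℕ}
    (hK : OnlyKoszulSyzygies (gen N : ℕ → UPoly R) N)
    (hQ : ∀ b : UPoly R, b * gen N N ∈ rowIdeal N N → b ∈ detIdeal N) {f : UPoly R}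
    (hf : xVar N * f ∈ detIdeal (N + 1)) : f ∈ detIdeal (N + 1) :=
  Ideal.mem_of_mul_mem_of_lift (σ := (setXZero N : UPoly R →ₐ[R] UPoly R).toRingHom)
    (mul_right_injective₀ (X_ne_zero _)) (setXZero_xVar_self N) (exists_eq_setXZero_add N)
    (setXZero_gen_succ N) (setXZero_genDet N (N + 1))
    (fun _ _ h => exists_xVar_mul_of_sum_add_mul_genDet_eq_zero hK hQ h) hf

variable (R) in
abbrev LocX (M : ℕ) := Localization.Away (xVar M : UPoly R)

/-- The shift of `w i M` that solves `gen (M + 1) i = 0` in `R[x, w][1/x M]`, for `i < k`. -/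
def solveRowsShift (k M : ℕ) : ℕ ⊕ ℕ × ℕ → LocX R M
  | .inl _ => 0
  | .inr (i, j) => if j = M ∧ i < k then
      -(algebraMap (UPoly R) (LocX R M) (gen (M + 1) i) *
        IsLocalization.Away.invSelf (xVar M : UPoly R)) else 0

def solveRows (k M : ℕ) : UPoly R →+* LocX R M :=
  eval₂Hom ((algebraMap (UPoly R) (LocX R M)).comp C) fun v =>
    algebraMap (UPoly R) (LocX R M) (X v) + solveRowsShift k M v

theorem solveRows_sub_mem (k M : ℕ) (f : UPoly R) :
    solveRows k M f - algebraMap (UPoly R) (LocX R M) f ∈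
      (rowIdeal k (M + 1)).map (algebraMap (UPoly R) (LocX R M)) := by
  refine eval₂Hom_add_sub_algebraMap_mem _ (fun v => ?_) f
  rcases v with j | ⟨i, j⟩
  · exact zero_mem _
  · rw [solveRowsShift]
    split_ifs with h
    · exact neg_mem (Ideal.mul_mem_right _ _
        (Ideal.mem_map_of_mem _ (Ideal.subset_span ⟨⟨i, h.2⟩, rfl⟩)))
    · exact zero_mem _

theorem solveRows_xVar (k M j : ℕ) :
    solveRows k M (xVar j : UPoly R) = algebraMap (UPoly R) (LocX R M) (xVar j) := by
  simp [solveRows, xVar, solveRowsShift]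

theorem solveRows_wVar (k M i j : ℕ) :
    solveRows k M (wVar i j : UPoly R) =
      algebraMap (UPoly R) (LocX R M) (wVar i j) + solveRowsShift k M (.inr (i, j)) := by
  simp [solveRows, wVar]

theorem solveRows_gen_succ {k M i : ℕ} (hi : i < k) :
    solveRows k M (gen (M + 1) i : UPoly R) = 0 := by
  have hinv := IsLocalization.Away.mul_invSelf (S := LocX R M) (xVar M : UPoly R)
  simp only [gen, map_sum, map_mul, solveRows_wVar, solveRows_xVar, add_mul, sum_add_distrib,
    solveRowsShift, ite_mul, zero_mul, hi, and_true, sum_ite_eq', mem_range, M.lt_succ_self,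
    if_true]
  simp only [← map_mul, ← map_sum]
  rw [← gen]
  linear_combination (-(algebraMap (UPoly R) (LocX R M)) (gen (M + 1) i)) * hinv

theorem rowIdeal_le_ker_solveRows (k M : ℕ) :
    rowIdeal k (M + 1) ≤ RingHom.ker (solveRows k M : UPoly R →+* LocX R M) :=
  Ideal.span_le.2 (Set.range_subset_iff.2 fun i => solveRows_gen_succ i.isLt)

variable [IsDomain R]

instance (M : ℕ) : IsDomain (LocX R M) :=
  IsLocalization.isDomain_localization (powers_le_nonZeroDivisors_of_noZeroDivisors (X_ne_zero _))

theorem solveRows_genDet (N : ℕ) : solveRows (N + 1) N (genDet (N + 1) : UPoly R) = 0 := by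
  let ι := algebraMap (UPoly R) (LocX R N)
  have hx : ι (xVar N) ≠ 0 := fun h => by
    simpa [ι, h] using IsLocalization.Away.mul_invSelf (S := LocX R N) (xVar N : UPoly R)
  rw [genDet, RingHom.map_det]
  refine exists_mulVec_eq_zero_iff.1 ⟨fun b => ι (xVar b), fun h => hx ?_, funext fun a => ?_⟩
  · simpa using congrFun h (Fin.last N)
  · rw [Pi.zero_apply, ← solveRows_gen_succ (k := N + 1) a.isLt, gen, map_sum,
      ← Fin.sum_univ_eq_sum_range]
    simp [mulVec, dotProduct, genMatrix, solveRows_xVar, ι]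

theorem isPrime_of_le_ker_solveRows {k M : ℕ} {J : Ideal (UPoly R)}
    (hJ : rowIdeal k (M + 1) ≤ J) (hker : J ≤ RingHom.ker (solveRows k M))
    (hsat : ∀ f, xVar M * f ∈ J → f ∈ J) : J.IsPrime :=
  Ideal.ker_eq_of_sub_algebraMap_mem_map hker
    (fun f => Ideal.map_mono hJ (solveRows_sub_mem k M f)) hsat ▸ RingHom.ker_isPrime _

theorem rowIdeal_isPrime {k M : ℕ} (hK : OnlyKoszulSyzygies (gen M : ℕ → UPoly R) k) :
    (rowIdeal k (M + 1) : Ideal (UPoly R)).IsPrime :=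
  isPrime_of_le_ker_solveRows le_rfl (rowIdeal_le_ker_solveRows k M)
    fun _ => rowIdeal_mem_of_xVar_mul_mem hK

theorem onlyKoszulSyzygies_gen :
    ∀ {k c : ℕ}, k ≤ c → OnlyKoszulSyzygies (gen c : ℕ → UPoly R) k
  | 0, c, _ => onlyKoszulSyzygies_zero _
  | k + 1, M + 1, hk =>
    OnlyKoszulSyzygies.succ (onlyKoszulSyzygies_gen (by omega : k ≤ M + 1))
      (rowIdeal_isPrime (onlyKoszulSyzygies_gen (by omega : k ≤ M)))
      (gen_notMem_rowIdeal M.succ_pos k)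

theorem detIdeal_succ_isPrime_of {N : ℕ}
    (hQ : ∀ b : UPoly R, b * gen N N ∈ rowIdeal N N → b ∈ detIdeal N) :
    (detIdeal (N + 1) : Ideal (UPoly R)).IsPrime :=
  isPrime_of_le_ker_solveRows le_sup_left
    (sup_le (rowIdeal_le_ker_solveRows _ _)
      (Ideal.span_le.2 (Set.singleton_subset_iff.2 (solveRows_genDet N))))
    fun _ => detIdeal_mem_of_xVar_mul_mem (onlyKoszulSyzygies_gen le_rfl) hQ

theorem detIdeal_succ_isPrime : ∀ N : ℕ, (detIdeal (N + 1) : Ideal (UPoly R)).IsPrime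
  | 0 => detIdeal_succ_isPrime_of fun b _ => by
    simp [detIdeal, genDet, genMatrix]
  | N + 1 => detIdeal_succ_isPrime_of fun b hb =>
    ((detIdeal_succ_isPrime N).mem_or_mem (Ideal.mem_sup_left hb)).resolve_right
      (gen_notMem_detIdeal N.succ_pos)

end

end StarLSS

section StarPolyRing

open Finset Matrix StarLSS

variable (K : Type) [Field K] (n : ℕ)

noncomputable section

def starVarIdeal : Ideal (starPolyRing K n) :=
  Ideal.span (Set.range fun i : Fin (n - 1) => (X (Sum.inl i) : starPolyRing K n))

def starDetIdeal : Ideal (starPolyRing K n) := starIdeal K n ⊔ Ideal.span {detW K n}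

def starEmbedVars : Fin (n - 1) ⊕ Fin (n - 1) × Fin (n - 1) → ℕ ⊕ ℕ × ℕ :=
  Sum.map Fin.val (Prod.map Fin.val Fin.val)

theorem starEmbedVars_injective : Function.Injective (starEmbedVars n) :=
  Fin.val_injective.sumMap (Fin.val_injective.prodMap Fin.val_injective)

theorem rename_starGen (i : Fin (n - 1)) :
    rename (starEmbedVars n) (starGen K n i) = gen (n - 1) i := by
  rw [starGen, map_sum, gen, ← Fin.sum_univ_eq_sum_range]
  simp [starEmbedVars, wVar, xVar]

theorem rename_detW : rename (starEmbedVars n) (detW K n) = genDet (n - 1) := by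
  rw [detW, AlgHom.map_det]
  exact congrArg det (Matrix.ext fun a b => by simp [starEmbedVars, genMatrix, wVar])

theorem starVarIdeal_isPrime : (starVarIdeal K n).IsPrime := by
  rw [starVarIdeal, show (fun i : Fin (n - 1) => (X (Sum.inl i) : starPolyRing K n)) =
    (X : _ → starPolyRing K n) ∘ Sum.inl from rfl, Set.range_comp]
  exact isPrime_span_X_image _

theorem map_rename_starDetIdeal :
    (starDetIdeal K n).map (rename (starEmbedVars n) : starPolyRing K n →ₐ[K] UPoly K) =
      detIdeal (n - 1) := by
  rw [starDetIdeal, starIdeal, Ideal.map_span_range_sup_span_singleton, detIdeal, rowIdeal]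
  simp only [Function.comp_def, rename_starGen, rename_detW]

theorem comap_rename_detIdeal :
    (detIdeal (n - 1)).comap (rename (starEmbedVars n) : starPolyRing K n →ₐ[K] UPoly K) =
      starDetIdeal K n := by
  rw [← map_rename_starDetIdeal]
  exact Ideal.comap_map_of_leftInverse (π := killCompl (starEmbedVars_injective n))
    (killCompl_rename_app (starEmbedVars_injective n)) _

theorem starDetIdeal_isPrime (hn : 2 ≤ n) : (starDetIdeal K n).IsPrime := by
  obtain ⟨N, hN⟩ : ∃ N, n - 1 = N + 1 := ⟨n - 2, by omega⟩
  have : (detIdeal (n - 1) : Ideal (UPoly K)).IsPrime := hN ▸ detIdeal_succ_isPrime N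
  exact comap_rename_detIdeal K n ▸ Ideal.IsPrime.comap _

theorem starIdeal_le_starVarIdeal : starIdeal K n ≤ starVarIdeal K n :=
  Ideal.span_le.2 (Set.range_subset_iff.2 fun _ =>
    sum_mem fun j _ => Ideal.mul_mem_left _ _ (Ideal.subset_span ⟨j, rfl⟩))

theorem starVarIdeal_le_colon : starVarIdeal K n ≤ (starIdeal K n).colon {detW K n} := by
  refine Ideal.span_le.2 (Set.range_subset_iff.2 fun j => Submodule.mem_colon_singleton.2 ?_)
  rw [smul_eq_mul, mul_comm, detW,
    ← sum_adjugate_mul_mulVec _ (fun j => (X (Sum.inl j) : starPolyRing K n)) j]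
  exact sum_mem fun i _ => Ideal.mul_mem_left _ _ (Ideal.subset_span ⟨i, rfl⟩)

theorem detW_notMem_starVarIdeal : detW K n ∉ starVarIdeal K n := fun h => by
  have hmap : (starVarIdeal K n).map (rename (starEmbedVars n)) ≤ varIdeal (n - 1) :=
    Ideal.map_le_iff_le_comap.2 (Ideal.span_le.2 (Set.range_subset_iff.2 fun j =>
      Ideal.subset_span ⟨j, by simp [starEmbedVars, xVar]⟩))
  exact genDet_notMem_varIdeal (n - 1) (n - 1)
    (rename_detW K n ▸ hmap (Ideal.mem_map_of_mem _ h))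

theorem X_inl_notMem_starDetIdeal (i : Fin (n - 1)) :
    (X (Sum.inl i) : starPolyRing K n) ∉ starDetIdeal K n := by
  let φ : starPolyRing K n →+* K := eval (Sum.elim 1 0)
  have : Nonempty (Fin (n - 1)) := ⟨i⟩
  have hQ : starDetIdeal K n ≤ RingHom.ker φ := by
    refine sup_le (Ideal.span_le.2 (Set.range_subset_iff.2 fun i => by simp [φ, starGen]))
      (Ideal.span_le.2 (Set.singleton_subset_iff.2 ?_))
    simp only [SetLike.mem_coe, RingHom.mem_ker, detW, RingHom.map_det]
    convert det_zero (R := K) (n := Fin (n - 1))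
    ext a b
    simp [φ]
  exact fun h => by simpa [φ] using hQ h

end

end StarPolyRing

/-- For `n ≥ 2` and the ideal `I = (f_1, …, f_{n-1})` with `f_i = ∑_j w_{ij} x_j`:
`I = (x_1, …, x_{n-1}) ∩ (I + (det W))`, both `(x_1, …, x_{n-1})` and `I + (det W)` are
prime, and the minimal primes of `I` are exactly these two ideals. -/
theorem star_lss_minimal_primes (K : Type) [Field K] (n : ℕ) (hn : 2 ≤ n) :
    starIdeal K n =
        Ideal.span (Set.range fun i : Fin (n - 1) =>
          (MvPolynomial.X (Sum.inl i) : starPolyRing K n)) ⊓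
          (starIdeal K n ⊔ Ideal.span {detW K n}) ∧
      (Ideal.span (Set.range fun i : Fin (n - 1) =>
        (MvPolynomial.X (Sum.inl i) : starPolyRing K n))).IsPrime ∧
      (starIdeal K n ⊔ Ideal.span {detW K n}).IsPrime ∧
      (starIdeal K n).minimalPrimes =
        {Ideal.span (Set.range fun i : Fin (n - 1) =>
          (MvPolynomial.X (Sum.inl i) : starPolyRing K n)),
         starIdeal K n ⊔ Ideal.span {detW K n}} := by
  change starIdeal K n = starVarIdeal K n ⊓ starDetIdeal K n ∧ (starVarIdeal K n).IsPrime ∧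
    (starDetIdeal K n).IsPrime ∧
    (starIdeal K n).minimalPrimes = {starVarIdeal K n, starDetIdeal K n}
  have hP := starVarIdeal_isPrime K n
  have hQ := starDetIdeal_isPrime K n hn
  have hI : starIdeal K n = starVarIdeal K n ⊓ starDetIdeal K n :=
    (Ideal.inf_sup_span_singleton_eq (starIdeal_le_starVarIdeal K n)
      (detW_notMem_starVarIdeal K n) (starVarIdeal_le_colon K n)).symm
  refine ⟨hI, hP, hQ, hI ▸ Ideal.minimalPrimes_inf_eq_pair (fun h => ?_) fun h => ?_⟩
  · let i₀ : Fin (n - 1) := ⟨0, by omega⟩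
    exact X_inl_notMem_starDetIdeal K n i₀ (h (Ideal.subset_span ⟨i₀, rfl⟩))
  · exact detW_notMem_starVarIdeal K n (h (Ideal.mem_sup_right (Ideal.mem_span_singleton_self _)))
end
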